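/- Let c, d, k be reals with c - d > k - 1 ≥ 0 and d ≥ 0. If B_{k,recv}, B_send, B_recv are reals satisfying B_{k,recv} · B_send + (k-1)(B_recv - B_{k,recv}) ≥ B_send · (c - d), B_recv ≤ c, and c - d ≤ B_send ≤ c, then B_{k,recv} ≥ c - d / (1 - (k-1)/(c-d)). -/
import Mathlib


/-- Combined counting and monotonicity argument establishing the delivery power ℓ. -/
theorem stmt_9 (c d k Bkrecv Bsend Brecv : ℝ)
    (h1 : c - d > k - 1) (h2 : k - 1 ≥ 0) (hd : 0 ≤ d)
    (hcount : Bkrecv * Bsend + (k - 1) * (Brecv - Bkrecv) ≥ Bsend * (c - d))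
    (hrecv : Brecv ≤ c)
    (hsend1 : c - d ≤ Bsend) (hsend2 : Bsend ≤ c) :
    Bkrecv ≥ c - d / (1 - (k - 1) / (c - d)) := by
  have he : 0 < c - d := by linarith
  have hem : 0 < c - d - (k - 1) := by linarith
  have hbm : 0 < Bsend - (k - 1) := by linarith
  have h3 : 1 - (k - 1) / (c - d) = (c - d - (k - 1)) / (c - d) := by
    field_simp
  have h4 : d / (1 - (k - 1) / (c - d)) = d * (c - d) / (c - d - (k - 1)) := by
    rw [h3]; field_simp
  rw [h4, ge_iff_le, sub_le_iff_le_add, ← sub_le_iff_le_add', le_div_iff₀ hem]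
  have key1 : (c - Bkrecv) * (Bsend - (k - 1)) ≤ d * Bsend := by
    nlinarith [mul_nonneg h2 (sub_nonneg.2 hrecv)]
  nlinarith [mul_le_mul_of_nonneg_right key1 hem.le,
    mul_nonneg (mul_nonneg hd h2) (sub_nonneg.2 hsend1)]
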